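/- There is a bijection between (isomorphism classes of) unbalanced split graphs on n vertices and (isomorphism classes of) split graphs on at most n − 1 vertices: given an unbalanced split graph with S-max KS-partition and swing vertex s ∈ S, delete s and all vertices of K with no neighbor in S − {s}; the inverse adds a new swing vertex adjacent to a suitably enlarged clique. -/

import Mathlib

open SimpleGraph
attribute [local instance] Classical.propDecidable

variable {V : Type*} [Fintype V] [DecidableEq V]

/-- A set of vertices is stable (independent) if no two of its elements are adjacent. -/
def IsStableSet (G : SimpleGraph V) (s : Set V) : Prop :=
  s.Pairwise fun a b => ¬ G.Adj a b

/-- The clique number ω(G). -/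
noncomputable def omegaNum (G : SimpleGraph V) : ℕ :=
  Finset.univ.sup fun s : Finset V => if G.IsClique (s : Set V) then s.card else 0

/-- The independence number α(G). -/
noncomputable def alphaNum (G : SimpleGraph V) : ℕ :=
  Finset.univ.sup fun s : Finset V => if IsStableSet G (s : Set V) then s.card else 0

/-- A KS-partition of `G`: a partition of the vertex set into a clique `K` and a stable set `S`. -/
def IsKSPartition (G : SimpleGraph V) (K S : Finset V) : Prop :=
  Disjoint K S ∧ K ∪ S = Finset.univ ∧ G.IsClique (K : Set V) ∧ IsStableSet G (S : Set V)

/-- `G` is a split graph. -/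
def IsSplit (G : SimpleGraph V) : Prop := ∃ K S : Finset V, IsKSPartition G K S

/-- A split graph is balanced if it has a KS-partition with `|K| = ω(G)` and `|S| = α(G)`. -/
def IsBalanced (G : SimpleGraph V) : Prop :=
  ∃ K S : Finset V, IsKSPartition G K S ∧ K.card = omegaNum G ∧ S.card = alphaNum G

/-- Isomorphism of unbalanced split graphs on `Fin n`. -/
def USplitIsoRel (n : ℕ)
    (G H : {G : SimpleGraph (Fin n) // IsSplit G ∧ ¬ IsBalanced G}) : Prop :=
  Nonempty (G.1 ≃g H.1)

/-- Isomorphism of split graphs on vertex sets of size `t ≤ n − 1`. -/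
def SmallSplitRel (n : ℕ)
    (G H : Σ t : Fin n, {G : SimpleGraph (Fin t.val) // IsSplit G}) : Prop :=
  Nonempty (G.2.1 ≃g H.2.1)

/-!
Fix an S-max KS-partition `(K, S)` of an unbalanced split graph `G` with swing vertex `s`, and let
`D` consist of `s` and the vertices of `K` whose only neighbour in `S` is `s`. Being S-max means
exactly that every vertex of `K` has a neighbour in `S`, so the restriction of `(K, S)` to `G - D`
is still S-max. `D` is a clique, and a vertex outside `D` is adjacent to all of `D` or to none of it
according as it lies in `K` or in `S`: `G` is recovered from `G - D` by adding a clique of `|D|`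
new vertices joined to the clique side of an S-max partition. Conversely, in such an extension one
new vertex is a swing vertex whose deletion set is exactly the new clique, and the extension is
unbalanced. Both constructions are independent of the choices up to isomorphism: two S-max
partitions differ by exchanging a pair of twins, and two swing vertices of one partition are twins.
-/

section Numbers

variable {α : Type*} [Fintype α] {G : SimpleGraph α}

theorem card_le_alphaNum {T : Finset α} (hT : IsStableSet G T) : T.card ≤ alphaNum G := by
  simpa [alphaNum, hT] using Finset.le_sup (f := fun s : Finset α =>
    if IsStableSet G (s : Set α) then s.card else 0) (Finset.mem_univ T)

theorem exists_card_eq_alphaNum (G : SimpleGraph α) :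
    ∃ T : Finset α, IsStableSet G T ∧ T.card = alphaNum G := by
  obtain ⟨T, -, hT⟩ := Finset.exists_mem_eq_sup Finset.univ Finset.univ_nonempty
    fun s : Finset α => if IsStableSet G (s : Set α) then s.card else 0
  by_cases h : IsStableSet G T
  · exact ⟨T, h, by simp [alphaNum, hT, h]⟩
  · exact ⟨∅, by simp [IsStableSet], by simp [alphaNum, hT, h]⟩

variable [DecidableEq α]

theorem card_le_omegaNum {C : Finset α} (hC : G.IsClique C) : C.card ≤ omegaNum G := by
  simpa [omegaNum, hC] using Finset.le_sup (f := fun s : Finset α =>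
    if G.IsClique (s : Set α) then s.card else 0) (Finset.mem_univ C)

theorem exists_card_eq_omegaNum (G : SimpleGraph α) :
    ∃ C : Finset α, G.IsClique C ∧ C.card = omegaNum G := by
  obtain ⟨C, -, hC⟩ := Finset.exists_mem_eq_sup Finset.univ Finset.univ_nonempty
    fun s : Finset α => if G.IsClique (s : Set α) then s.card else 0
  by_cases h : G.IsClique C
  · exact ⟨C, h, by simp [omegaNum, hC, h]⟩
  · exact ⟨∅, by simp, by simp [omegaNum, hC, h]⟩

end Numbers

section StableSets

variable {α : Type*} {G : SimpleGraph α}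

theorem IsStableSet.eq_of_mem_isClique {C T : Set α} (hT : IsStableSet G T)
    (hC : G.IsClique C) {a b : α} (haC : a ∈ C) (haT : a ∈ T) (hbC : b ∈ C) (hbT : b ∈ T) :
    a = b := by
  by_contra hab
  exact hT haT hbT hab (hC haC hbC hab)

theorem IsStableSet.insert {T : Set α} {a : α} (hT : IsStableSet G T)
    (ha : ∀ b ∈ T, ¬ G.Adj a b) : IsStableSet G (insert a T) :=
  Set.pairwise_insert.2 ⟨hT, fun b hb _ => ⟨ha b hb, fun h => ha b hb h.symm⟩⟩

end StableSets

namespace IsKSPartition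

variable {G : SimpleGraph V} {K S : Finset V}

theorem disjoint (h : IsKSPartition G K S) : Disjoint K S := h.1

theorem union_eq_univ (h : IsKSPartition G K S) : K ∪ S = Finset.univ := h.2.1

theorem isClique (h : IsKSPartition G K S) : G.IsClique (K : Set V) := h.2.2.1

theorem isStableSet (h : IsKSPartition G K S) : IsStableSet G (S : Set V) := h.2.2.2

theorem mem_left_iff (h : IsKSPartition G K S) {v : V} : v ∈ K ↔ v ∉ S :=
  ⟨fun hK hS => Finset.disjoint_left.1 h.disjoint hK hS,
    fun hS => (Finset.mem_union.1 (h.union_eq_univ ▸ Finset.mem_univ v)).resolve_right hS⟩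

theorem mem_right_iff (h : IsKSPartition G K S) {v : V} : v ∈ S ↔ v ∉ K := by
  rw [h.mem_left_iff, not_not]

theorem card_add (h : IsKSPartition G K S) : K.card + S.card = Fintype.card V := by
  rw [← Finset.card_union_of_disjoint h.disjoint, h.union_eq_univ, Finset.card_univ]

theorem erase_insert (h : IsKSPartition G K S) {k : V} (hk : k ∈ K)
    (hkS : ∀ z ∈ S, ¬ G.Adj k z) : IsKSPartition G (K.erase k) (insert k S) := by
  refine ⟨?_, ?_, h.isClique.subset (by simp), ?_⟩
  · simp [Finset.disjoint_left, h.mem_left_iff]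
  · ext v
    by_cases hv : v = k <;> simp [hv, hk, h.mem_left_iff, or_iff_not_imp_left]
  · simpa using h.isStableSet.insert hkS

theorem card_eq_alphaNum_iff (h : IsKSPartition G K S) :
    S.card = alphaNum G ↔ ∀ k ∈ K, ∃ z ∈ S, G.Adj k z := by
  constructor
  · intro hS k hk
    by_contra! hkS
    have := card_le_alphaNum (h.erase_insert hk hkS).isStableSet
    rw [Finset.card_insert_of_notMem (h.mem_left_iff.1 hk)] at this
    omega
  · intro hadj
    obtain ⟨T, hT, hTc⟩ := exists_card_eq_alphaNum G
    refine le_antisymm (card_le_alphaNum h.isStableSet) (hTc ▸ ?_)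
    by_cases hTS : T ⊆ S
    · exact Finset.card_le_card hTS
    -- a stable `T ⊄ S` meets `K` in a single vertex `k`, and misses a neighbour `z ∈ S` of `k`
    obtain ⟨k, hkT, hkS⟩ := Finset.not_subset.1 hTS
    obtain ⟨z, hzS, hkz⟩ := hadj k (h.mem_left_iff.2 hkS)
    have hzT : z ∉ T := fun hzT => hT hkT hzT hkz.ne hkz
    have hsub : T.erase k ⊆ S.erase z := by
      intro t ht
      obtain ⟨htk, htT⟩ := Finset.mem_erase.1 ht
      refine Finset.mem_erase.2 ⟨ne_of_mem_of_not_mem htT hzT, ?_⟩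
      by_contra htS
      exact htk (hT.eq_of_mem_isClique h.isClique (h.mem_left_iff.2 htS) htT
        (h.mem_left_iff.2 hkS) hkT)
    have := Finset.card_le_card hsub
    rw [Finset.card_erase_of_mem hkT, Finset.card_erase_of_mem hzS] at this
    have := Finset.card_pos.2 ⟨z, hzS⟩
    omega

end IsKSPartition

theorem IsSplit.exists_card_eq_alphaNum {G : SimpleGraph V} (hG : IsSplit G) :
    ∃ K S : Finset V, IsKSPartition G K S ∧ S.card = alphaNum G := by
  obtain ⟨K, S, h⟩ := hG
  by_cases hadj : ∀ k ∈ K, ∃ z ∈ S, G.Adj k z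
  · exact ⟨K, S, h, h.card_eq_alphaNum_iff.2 hadj⟩
  obtain ⟨k, hk, hkS⟩ : ∃ k ∈ K, ∀ z ∈ S, ¬ G.Adj k z := by simpa using hadj
  have h' := h.erase_insert hk hkS
  refine ⟨_, _, h', h'.card_eq_alphaNum_iff.2 fun k' hk' =>
    ⟨k, Finset.mem_insert_self k S, ?_⟩⟩
  exact h.isClique (Finset.mem_of_mem_erase hk') hk (Finset.ne_of_mem_erase hk')

theorem IsKSPartition.exists_swing {G : SimpleGraph V} {K S : Finset V}
    (h : IsKSPartition G K S) (hS : S.card = alphaNum G) (hG : ¬ IsBalanced G) :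
    ∃ s ∈ S, ∀ k ∈ K, G.Adj s k := by
  have hK : K.card < omegaNum G := by
    refine (card_le_omegaNum h.isClique).lt_of_ne fun hK => hG ?_
    exact ⟨K, S, h, hK, hS⟩
  -- a maximum clique `C` is larger than `K` but meets `S` at most once, so `C = K ∪ {s}`
  obtain ⟨C, hC, hCc⟩ := exists_card_eq_omegaNum G
  have hCK : ¬ C ⊆ K := fun hCK => by have := Finset.card_le_card hCK; omega
  obtain ⟨s, hsC, hsK⟩ := Finset.not_subset.1 hCK
  have hsub : C.erase s ⊆ K := by
    intro c hc
    obtain ⟨hcs, hcC⟩ := Finset.mem_erase.1 hc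
    by_contra hcK
    exact hcs (h.isStableSet.eq_of_mem_isClique hC hcC (h.mem_right_iff.2 hcK) hsC
      (h.mem_right_iff.2 hsK))
  have hKC : K = C.erase s :=
    (Finset.eq_of_subset_of_card_le hsub (by rw [Finset.card_erase_of_mem hsC]; omega)).symm
  refine ⟨s, h.mem_right_iff.2 hsK, fun k hk => hC hsC ?_ (ne_of_mem_of_not_mem hk hsK).symm⟩
  exact Finset.mem_of_mem_erase (hKC ▸ hk)

theorem IsKSPartition.not_isBalanced_of_adj {G : SimpleGraph V} {K S : Finset V}
    (h : IsKSPartition G K S) {s : V} (hs : s ∈ S) (hsK : ∀ k ∈ K, G.Adj s k) :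
    ¬ IsBalanced G := by
  rintro ⟨K', S', h', hK', hS'⟩
  have hC : G.IsClique (insert s K : Finset V) := by
    rw [Finset.coe_insert]
    exact h.isClique.insert fun k hk _ => hsK k hk
  have := card_le_omegaNum hC
  have := card_le_alphaNum h.isStableSet
  rw [Finset.card_insert_of_notMem (h.mem_right_iff.1 hs)] at *
  have := h.card_add
  have := h'.card_add
  omega

section Transport

variable {α β : Type*} {G : SimpleGraph α} {G' : SimpleGraph β}

theorem SimpleGraph.Iso.isStableSet_image (ψ : G ≃g G') {T : Set α} (hT : IsStableSet G T) :
    IsStableSet G' (ψ '' T) :=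
  ψ.injective.injOn.pairwise_image.2 fun _ ha _ hb hab hadj =>
    hT ha hb hab (ψ.map_adj_iff.1 hadj)

theorem SimpleGraph.Iso.isClique_image (ψ : G ≃g G') {C : Set α} (hC : G.IsClique C) :
    G'.IsClique (ψ '' C) :=
  ψ.injective.injOn.pairwise_image.2 fun _ ha _ hb hab =>
    ψ.map_adj_iff.2 (hC ha hb hab)

variable [Fintype α] [Fintype β]

theorem SimpleGraph.Iso.alphaNum_le (ψ : G ≃g G') : alphaNum G ≤ alphaNum G' := by
  classical
  obtain ⟨T, hT, hTc⟩ := exists_card_eq_alphaNum G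
  rw [← hTc, ← Finset.card_image_of_injective T ψ.injective]
  exact card_le_alphaNum (by simpa using ψ.isStableSet_image hT)

theorem SimpleGraph.Iso.alphaNum_eq (ψ : G ≃g G') : alphaNum G = alphaNum G' :=
  ψ.alphaNum_le.antisymm ψ.symm.alphaNum_le

variable [DecidableEq α] [DecidableEq β]

theorem SimpleGraph.Iso.omegaNum_le (ψ : G ≃g G') : omegaNum G ≤ omegaNum G' := by
  obtain ⟨C, hC, hCc⟩ := exists_card_eq_omegaNum G
  rw [← hCc, ← Finset.card_image_of_injective C ψ.injective]
  exact card_le_omegaNum (by simpa using ψ.isClique_image hC)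

theorem SimpleGraph.Iso.omegaNum_eq (ψ : G ≃g G') : omegaNum G = omegaNum G' :=
  ψ.omegaNum_le.antisymm ψ.symm.omegaNum_le

theorem SimpleGraph.Iso.isKSPartition_image (ψ : G ≃g G') {K S : Finset α}
    (h : IsKSPartition G K S) : IsKSPartition G' (K.image ψ) (S.image ψ) := by
  refine ⟨(Finset.disjoint_image ψ.injective).2 h.disjoint, ?_, ?_, ?_⟩
  · rw [← Finset.image_union, h.union_eq_univ, Finset.image_univ_of_surjective ψ.surjective]
  · simpa using ψ.isClique_image h.isClique
  · simpa using ψ.isStableSet_image h.isStableSet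

theorem SimpleGraph.Iso.isSplit (ψ : G ≃g G') (hG : IsSplit G) : IsSplit G' :=
  let ⟨_, _, h⟩ := hG
  ⟨_, _, ψ.isKSPartition_image h⟩

theorem SimpleGraph.Iso.isBalanced (ψ : G ≃g G') (hG : IsBalanced G) : IsBalanced G' := by
  obtain ⟨K, S, h, hK, hS⟩ := hG
  refine ⟨_, _, ψ.isKSPartition_image h, ?_, ?_⟩
  · rw [Finset.card_image_of_injective K ψ.injective, hK, ψ.omegaNum_eq]
  · rw [Finset.card_image_of_injective S ψ.injective, hS, ψ.alphaNum_eq]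

end Transport

section Twins

variable {α : Type*} [DecidableEq α]

def swapTwinsIso (G : SimpleGraph α) {x y : α}
    (h : ∀ z, z ≠ x → z ≠ y → (G.Adj x z ↔ G.Adj y z)) : G ≃g G where
  toEquiv := Equiv.swap x y
  map_rel_iff' {a b} := by
    simp only [Equiv.swap_apply_def]
    grind [G.adj_comm, SimpleGraph.irrefl]

@[simp]
theorem swapTwinsIso_apply {G : SimpleGraph α} {x y : α}
    (h : ∀ z, z ≠ x → z ≠ y → (G.Adj x z ↔ G.Adj y z)) (v : α) :
    swapTwinsIso G h v = Equiv.swap x y v :=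
  rfl

end Twins

namespace IsKSPartition

variable {G : SimpleGraph V} {K S K' S' : Finset V}

theorem mem_of_mem_of_ne (h : IsKSPartition G K S) (h' : IsKSPartition G K' S') {x z : V}
    (hxS : x ∈ S) (hxS' : x ∉ S') (hzS : z ∈ S) (hzx : z ≠ x) : z ∈ S' := by
  by_contra hzS'
  exact hzx (h.isStableSet.eq_of_mem_isClique h'.isClique (h'.mem_left_iff.2 hzS') hzS
    (h'.mem_left_iff.2 hxS') hxS)

/-- Two distinct S-max partitions exchange a single pair `x ∈ S`, `y ∈ S'`, and `x`, `y` are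
twins. -/
theorem exists_aut_of_card_eq_alphaNum (h : IsKSPartition G K S) (hS : S.card = alphaNum G)
    (h' : IsKSPartition G K' S') (hS' : S'.card = alphaNum G) :
    ∃ φ : G ≃g G, ∀ v, φ v ∈ S' ↔ v ∈ S := by
  by_cases hSS : S ⊆ S'
  · obtain rfl := Finset.eq_of_subset_of_card_le hSS (by omega)
    exact ⟨.refl, fun _ => Iff.rfl⟩
  obtain ⟨x, hxS, hxS'⟩ := Finset.not_subset.1 hSS
  obtain ⟨y, hyS', hyS⟩ : ∃ y ∈ S', y ∉ S := by
    by_contra! hS'S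
    exact hSS (Finset.eq_of_subset_of_card_le hS'S (by omega)).ge
  have hSS' {z} (hzS : z ∈ S) (hzx : z ≠ x) : z ∈ S' :=
    h.mem_of_mem_of_ne h' hxS hxS' hzS hzx
  have hS'S {z} (hzS' : z ∈ S') (hzy : z ≠ y) : z ∈ S :=
    h'.mem_of_mem_of_ne h hyS' hyS hzS' hzy
  have htwins (z : V) (hzx : z ≠ x) (hzy : z ≠ y) : G.Adj x z ↔ G.Adj y z := by
    by_cases hzS : z ∈ S
    · exact iff_of_false (h.isStableSet hxS hzS hzx.symm)
        (h'.isStableSet hyS' (hSS' hzS hzx) hzy.symm)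
    · have hzS' : z ∉ S' := fun hzS' => hzS (hS'S hzS' hzy)
      exact iff_of_true (h'.isClique (h'.mem_left_iff.2 hxS') (h'.mem_left_iff.2 hzS') hzx.symm)
        (h.isClique (h.mem_left_iff.2 hyS) (h.mem_left_iff.2 hzS) hzy.symm)
  refine ⟨swapTwinsIso G htwins, fun v => ?_⟩
  rw [swapTwinsIso_apply]
  rcases eq_or_ne v x with rfl | hvx
  · simp [hyS', hxS]
  rcases eq_or_ne v y with rfl | hvy
  · simp [hxS', hyS]
  rw [Equiv.swap_apply_of_ne_of_ne hvx hvy]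
  exact ⟨(hS'S · hvy), (hSS' · hvx)⟩

end IsKSPartition

theorem IsKSPartition.exists_iso_of_card_eq_alphaNum {W : Type*} [Fintype W] [DecidableEq W]
    {G : SimpleGraph V} {G' : SimpleGraph W} (ψ : G ≃g G') {K S : Finset V} {K' S' : Finset W}
    (h : IsKSPartition G K S) (hS : S.card = alphaNum G)
    (h' : IsKSPartition G' K' S') (hS' : S'.card = alphaNum G') :
    ∃ χ : G ≃g G', ∀ v, χ v ∈ S' ↔ v ∈ S := by
  obtain ⟨φ, hφ⟩ := (ψ.isKSPartition_image h).exists_aut_of_card_eq_alphaNum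
    (by rw [Finset.card_image_of_injective S ψ.injective, hS, ψ.alphaNum_eq]) h' hS'
  exact ⟨ψ.trans φ, fun v => (hφ (ψ v)).trans ψ.injective.mem_finset_image⟩

theorem IsKSPartition.induce {G : SimpleGraph V} {K S : Finset V} (h : IsKSPartition G K S)
    (T : Set V) [Fintype T] [DecidablePred (· ∈ T)] :
    IsKSPartition (G.induce T) (K.subtype (· ∈ T)) (S.subtype (· ∈ T)) := by
  refine ⟨?_, ?_, ?_, ?_⟩
  · simp [Finset.disjoint_left, h.mem_left_iff]
  · ext v
    simp [h.mem_left_iff, or_iff_not_imp_left]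
  · exact fun a ha b hb hab => h.isClique (Finset.mem_subtype.1 ha) (Finset.mem_subtype.1 hb)
      (Subtype.val_injective.ne hab)
  · exact fun a ha b hb hab => h.isStableSet (Finset.mem_subtype.1 ha)
      (Finset.mem_subtype.1 hb) (Subtype.val_injective.ne hab)

theorem IsSplit.induce {G : SimpleGraph V} (hG : IsSplit G) (T : Set V) [Fintype T]
    [DecidablePred (· ∈ T)] : IsSplit (G.induce T) :=
  let ⟨_, _, h⟩ := hG
  ⟨_, _, h.induce T⟩

structure IsSwingPartition (G : SimpleGraph V) (K S : Finset V) (s : V) : Prop where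
  isKSPartition : IsKSPartition G K S
  card_eq_alphaNum : S.card = alphaNum G
  mem : s ∈ S
  adj : ∀ k ∈ K, G.Adj s k

theorem exists_isSwingPartition {G : SimpleGraph V} (hG : IsSplit G) (hG' : ¬ IsBalanced G) :
    ∃ K S s, IsSwingPartition G K S s := by
  obtain ⟨K, S, h, hS⟩ := hG.exists_card_eq_alphaNum
  obtain ⟨s, hs, hsK⟩ := h.exists_swing hS hG'
  exact ⟨K, S, s, h, hS, hs, hsK⟩

section DeletionSet

variable {α β : Type*}

def deletionSet (G : SimpleGraph α) (K S : Finset α) (s : α) : Set α :=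
  {v | v = s ∨ v ∈ K ∧ ∀ z ∈ S, G.Adj v z → z = s}

theorem mem_deletionSet {G : SimpleGraph α} {K S : Finset α} {s v : α} :
    v ∈ deletionSet G K S s ↔ v = s ∨ v ∈ K ∧ ∀ z ∈ S, G.Adj v z → z = s :=
  Iff.rfl

theorem self_mem_deletionSet (G : SimpleGraph α) (K S : Finset α) (s : α) :
    s ∈ deletionSet G K S s :=
  Or.inl rfl

theorem deletionSet_congr {G : SimpleGraph α} {G' : SimpleGraph β} (ψ : G ≃g G')
    {K S : Finset α} {K' S' : Finset β} (hK : ∀ v, ψ v ∈ K' ↔ v ∈ K)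
    (hS : ∀ v, ψ v ∈ S' ↔ v ∈ S) (s v : α) :
    ψ v ∈ deletionSet G' K' S' (ψ s) ↔ v ∈ deletionSet G K S s := by
  simp only [mem_deletionSet, hK, ψ.apply_eq_iff_eq]
  rw [ψ.surjective.forall]
  simp only [hS, ψ.map_adj_iff, ψ.apply_eq_iff_eq]

end DeletionSet

namespace IsSwingPartition

variable {G : SimpleGraph V} {K S : Finset V} {s : V}

theorem adj_iff (hT : IsSwingPartition G K S s) {v : V} : G.Adj s v ↔ v ∈ K :=
  ⟨fun hv => hT.isKSPartition.mem_left_iff.2 fun hvS =>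
    hT.isKSPartition.isStableSet hT.mem hvS hv.ne hv, hT.adj v⟩

theorem adj_iff_of_notMem_of_mem (hT : IsSwingPartition G K S s) {v d : V}
    (hv : v ∉ deletionSet G K S s) (hd : d ∈ deletionSet G K S s) : G.Adj v d ↔ v ∈ K := by
  rcases hd with rfl | ⟨hdK, hd⟩
  · rw [G.adj_comm, hT.adj_iff]
  refine ⟨fun hvd => hT.isKSPartition.mem_left_iff.2 fun hvS => hv (Or.inl ?_),
    fun hvK => hT.isKSPartition.isClique hvK hdK ?_⟩
  · exact hd v hvS hvd.symm
  · rintro rfl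
    exact hv (Or.inr ⟨hdK, hd⟩)

theorem isClique_deletionSet (hT : IsSwingPartition G K S s) :
    G.IsClique (deletionSet G K S s) := by
  rintro d (rfl | ⟨hdK, -⟩) d' (rfl | ⟨hd'K, -⟩) hne
  · exact absurd rfl hne
  · exact hT.adj _ hd'K
  · exact (hT.adj _ hdK).symm
  · exact hT.isKSPartition.isClique hdK hd'K hne

theorem deletionSet_eq_singleton_of_ne {s' : V} (hT' : IsSwingPartition G K S s') (hne : s ≠ s') :
    deletionSet G K S s = {s} := by
  refine Set.eq_singleton_iff_unique_mem.2 ⟨self_mem_deletionSet G K S s, ?_⟩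
  rintro v (rfl | ⟨hvK, hv⟩)
  · rfl
  · exact absurd (hv s' hT'.mem (hT'.adj v hvK).symm).symm hne

theorem card_subtype_eq_alphaNum (hT : IsSwingPartition G K S s) :
    (S.subtype (· ∈ (deletionSet G K S s)ᶜ)).card =
      alphaNum (G.induce (deletionSet G K S s)ᶜ) := by
  refine (hT.isKSPartition.induce (deletionSet G K S s)ᶜ).card_eq_alphaNum_iff.2 ?_
  rintro ⟨k, hkD⟩ hk
  rw [Finset.mem_subtype] at hk
  simp only [Set.mem_compl_iff, mem_deletionSet, not_or, not_and, not_forall] at hkD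
  obtain ⟨z, hzS, hkz, hzs⟩ := hkD.2 hk
  refine ⟨⟨z, ?_⟩, Finset.mem_subtype.2 hzS, hkz⟩
  rintro (rfl | ⟨hzK, -⟩)
  · exact hzs rfl
  · exact hT.isKSPartition.mem_left_iff.1 hzK hzS

end IsSwingPartition

theorem IsSwingPartition.nonempty_iso_induce {W : Type*} [Fintype W] [DecidableEq W]
    {G : SimpleGraph V} {G' : SimpleGraph W} (ψ : G ≃g G') {K S : Finset V} {s : V}
    {K' S' : Finset W} {s' : W} (hT : IsSwingPartition G K S s)
    (hT' : IsSwingPartition G' K' S' s') :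
    Nonempty (G.induce (deletionSet G K S s)ᶜ ≃g G'.induce (deletionSet G' K' S' s')ᶜ) := by
  obtain ⟨χ, hχS⟩ := hT.isKSPartition.exists_iso_of_card_eq_alphaNum ψ hT.card_eq_alphaNum
    hT'.isKSPartition hT'.card_eq_alphaNum
  have hχK (v : V) : χ v ∈ K' ↔ v ∈ K := by
    rw [hT'.isKSPartition.mem_left_iff, hT.isKSPartition.mem_left_iff, hχS]
  have hχT : IsSwingPartition G' K' S' (χ s) :=
    { hT' with
      mem := (hχS s).2 hT.mem
      adj := fun k hk => by
        obtain ⟨v, rfl⟩ := χ.surjective k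
        exact χ.map_adj_iff.2 (hT.adj v ((hχK v).1 hk)) }
  have e : G.induce (deletionSet G K S s)ᶜ ≃g G'.induce (deletionSet G' K' S' (χ s))ᶜ :=
    χ.induce (χ.toEquiv.bijOn fun v => not_congr (deletionSet_congr χ hχK hχS s v))
  rcases eq_or_ne (χ s) s' with hs | hs
  · exact ⟨hs ▸ e⟩
  -- two distinct swing vertices of one partition are twins, and each deletes only itself
  have htwins (z : W) (_ : z ≠ χ s) (_ : z ≠ s') : G'.Adj (χ s) z ↔ G'.Adj s' z := by
    rw [hχT.adj_iff, hT'.adj_iff]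
  have e' : G'.induce {χ s}ᶜ ≃g G'.induce {s'}ᶜ :=
    (swapTwinsIso G' htwins).induce ((Equiv.swap _ _).bijOn fun v => by
      simp [Equiv.swap_apply_eq_iff])
  rw [hT'.deletionSet_eq_singleton_of_ne hs] at e
  rw [hχT.deletionSet_eq_singleton_of_ne hs.symm]
  exact ⟨e.trans e'⟩

section CliqueExtension

variable {α : Type*}

def cliqueExtension (H : SimpleGraph α) (A : Finset α) (ρ : Type*) :
    SimpleGraph (α ⊕ ρ) where
  Adj
    | .inl a, .inl b => H.Adj a b
    | .inl a, .inr _ => a ∈ A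
    | .inr _, .inl b => b ∈ A
    | .inr i, .inr j => i ≠ j
  symm := ⟨by
    rintro (a | i) (b | j) h
    exacts [h.symm, h, h, Ne.symm h]⟩
  loopless := ⟨by
    rintro (a | i) h
    exacts [H.irrefl h, h rfl]⟩

variable {ρ : Type*} {H : SimpleGraph α} {A : Finset α}

@[simp]
theorem cliqueExtension_adj_inl_inl {a b : α} :
    (cliqueExtension H A ρ).Adj (.inl a) (.inl b) ↔ H.Adj a b :=
  Iff.rfl

@[simp]
theorem cliqueExtension_adj_inl_inr {a : α} {i : ρ} :
    (cliqueExtension H A ρ).Adj (.inl a) (.inr i) ↔ a ∈ A :=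
  Iff.rfl

@[simp]
theorem cliqueExtension_adj_inr_inl {a : α} {i : ρ} :
    (cliqueExtension H A ρ).Adj (.inr i) (.inl a) ↔ a ∈ A :=
  Iff.rfl

@[simp]
theorem cliqueExtension_adj_inr_inr {i j : ρ} :
    (cliqueExtension H A ρ).Adj (.inr i) (.inr j) ↔ i ≠ j :=
  Iff.rfl

theorem nonempty_iso_induce_compl_range_inr :
    Nonempty ((cliqueExtension H A ρ).induce (Set.range Sum.inr)ᶜ ≃g H) := by
  rw [Set.compl_range_inr]
  exact ⟨(Embedding.isoInduceRange ⟨.inl, Iff.rfl⟩).symm⟩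

def SimpleGraph.Iso.cliqueExtensionCongr {α' ρ' : Type*} {H' : SimpleGraph α'} {A' : Finset α'}
    (χ : H ≃g H') (hA : ∀ a, χ a ∈ A' ↔ a ∈ A) (e : ρ ≃ ρ') :
    cliqueExtension H A ρ ≃g cliqueExtension H' A' ρ' where
  toEquiv := χ.toEquiv.sumCongr e
  map_rel_iff' {u v} := by
    rcases u with a | i <;> rcases v with b | j
    · exact χ.map_adj_iff
    all_goals simp [hA, e.injective.ne_iff]

variable [Fintype α] [DecidableEq α] {B : Finset α}

theorem IsKSPartition.nonempty_iso_cliqueExtension {α' ρ' : Type*} [Fintype α'] [DecidableEq α']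
    {H' : SimpleGraph α'} {A' B' : Finset α'} (ψ : H ≃g H') (h : IsKSPartition H A B)
    (hB : B.card = alphaNum H) (h' : IsKSPartition H' A' B') (hB' : B'.card = alphaNum H')
    (e : ρ ≃ ρ') : Nonempty (cliqueExtension H A ρ ≃g cliqueExtension H' A' ρ') := by
  obtain ⟨χ, hχ⟩ := h.exists_iso_of_card_eq_alphaNum ψ hB h' hB'
  exact ⟨χ.cliqueExtensionCongr (fun a => by rw [h'.mem_left_iff, h.mem_left_iff, hχ]) e⟩

variable [Fintype ρ] [DecidableEq ρ]

theorem IsKSPartition.isKSPartition_cliqueExtension (h : IsKSPartition H A B) (r : ρ) :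
    IsKSPartition (cliqueExtension H A ρ) (A.disjSum (Finset.univ.erase r)) (B.disjSum {r}) := by
  refine ⟨?_, ?_, ?_, ?_⟩
  · rw [Finset.disjoint_left]
    rintro (a | i) <;> simp [h.mem_left_iff]
  · ext (a | i) <;> simp [h.mem_left_iff, or_iff_not_imp_left]
  · rintro (a | i) ha (b | j) hb hab <;>
      simp only [Finset.mem_coe, Finset.inl_mem_disjSum, Finset.inr_mem_disjSum] at ha hb
    · exact h.isClique ha hb (by simpa using hab)
    · exact ha
    · exact hb
    · simpa using hab
  · rintro (a | i) ha (b | j) hb hab <;>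
      simp only [Finset.mem_coe, Finset.inl_mem_disjSum, Finset.inr_mem_disjSum] at ha hb
    · exact h.isStableSet ha hb (by simpa using hab)
    · exact fun haA => h.mem_left_iff.1 haA ha
    · exact fun hbA => h.mem_left_iff.1 hbA hb
    · simp_all

theorem IsKSPartition.isSwingPartition_cliqueExtension (h : IsKSPartition H A B)
    (hB : B.card = alphaNum H) (r : ρ) :
    IsSwingPartition (cliqueExtension H A ρ) (A.disjSum (Finset.univ.erase r)) (B.disjSum {r})
      (.inr r) where
  isKSPartition := h.isKSPartition_cliqueExtension r
  card_eq_alphaNum := by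
    refine (h.isKSPartition_cliqueExtension r).card_eq_alphaNum_iff.2 ?_
    rintro (a | i) hk
    · obtain ⟨b, hb, hab⟩ := h.card_eq_alphaNum_iff.1 hB a (by simpa using hk)
      exact ⟨.inl b, by simpa using hb, hab⟩
    · exact ⟨.inr r, by simp, by simpa using hk⟩
  mem := by simp
  adj := by
    rintro (a | i) hk
    · simpa using hk
    · simpa [eq_comm] using hk

theorem IsKSPartition.deletionSet_cliqueExtension (h : IsKSPartition H A B)
    (hB : B.card = alphaNum H) (r : ρ) :
    deletionSet (cliqueExtension H A ρ) (A.disjSum (Finset.univ.erase r)) (B.disjSum {r})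
      (.inr r) = Set.range Sum.inr := by
  ext (a | i)
  · simp only [mem_deletionSet, Set.mem_range, reduceCtorEq, exists_false, iff_false,
      false_or, not_and, Finset.inl_mem_disjSum]
    intro ha hall
    obtain ⟨b, hb, hab⟩ := h.card_eq_alphaNum_iff.1 hB a ha
    exact Sum.inl_ne_inr (hall (.inl b) (by simpa using hb) hab)
  · simp only [mem_deletionSet, Set.mem_range, exists_apply_eq_apply, iff_true]
    by_cases hi : i = r
    · exact Or.inl (congrArg _ hi)
    refine Or.inr ⟨by simpa using hi, ?_⟩
    rintro (b | j) hz hadj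
    · exact absurd (by simpa using hz) (h.mem_left_iff.1 (by simpa using hadj))
    · simpa using hz

end CliqueExtension

noncomputable def IsSwingPartition.cliqueExtensionIso {G : SimpleGraph V} {K S : Finset V} {s : V}
    (hT : IsSwingPartition G K S s) :
    cliqueExtension (G.induce (deletionSet G K S s)ᶜ)
      (K.subtype (· ∈ (deletionSet G K S s)ᶜ)) (deletionSet G K S s) ≃g G where
  toEquiv := (Equiv.sumComm _ _).trans (Equiv.Set.sumCompl _)
  map_rel_iff' {u v} := by
    rcases u with ⟨a, ha⟩ | ⟨d, hd⟩ <;> rcases v with ⟨b, hb⟩ | ⟨d', hd'⟩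
    · simp
    · simpa using hT.adj_iff_of_notMem_of_mem ha hd'
    · simpa [G.adj_comm] using hT.adj_iff_of_notMem_of_mem hb hd
    · simpa using ⟨fun h => h.ne, hT.isClique_deletionSet hd hd'⟩

section Compilation

variable {n : ℕ}

abbrev UnbalancedSplitGraph (n : ℕ) := {G : SimpleGraph (Fin n) // IsSplit G ∧ ¬ IsBalanced G}

abbrev SmallSplitGraph (n : ℕ) := Σ t : Fin n, {G : SimpleGraph (Fin t.val) // IsSplit G}

theorem exists_eq_deletionSet {G : SimpleGraph V} (hG : IsSplit G) (hG' : ¬ IsBalanced G) :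
    ∃ D : Set V, ∃ K S s, IsSwingPartition G K S s ∧ deletionSet G K S s = D :=
  let ⟨K, S, s, hT⟩ := exists_isSwingPartition hG hG'
  ⟨_, K, S, s, hT, rfl⟩

noncomputable def chosenDeletionSet (x : UnbalancedSplitGraph n) : Set (Fin n) :=
  (exists_eq_deletionSet x.2.1 x.2.2).choose

theorem chosenDeletionSet_spec (x : UnbalancedSplitGraph n) :
    ∃ K S s, IsSwingPartition x.1 K S s ∧ deletionSet x.1 K S s = chosenDeletionSet x :=
  (exists_eq_deletionSet x.2.1 x.2.2).choose_spec

noncomputable def deleteSwing (x : UnbalancedSplitGraph n) : SmallSplitGraph n :=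
  ⟨⟨Fintype.card ↥(chosenDeletionSet x)ᶜ, by
      obtain ⟨K, S, s, -, hD⟩ := chosenDeletionSet_spec x
      exact (Fintype.card_subtype_lt (p := (· ∈ (chosenDeletionSet x)ᶜ))
        (not_not.2 (hD ▸ self_mem_deletionSet x.1 K S s))).trans_eq (Fintype.card_fin n)⟩,
    (x.1.induce (chosenDeletionSet x)ᶜ).overFin rfl,
    (overFinIso _ _).isSplit (x.2.1.induce _)⟩

noncomputable def addSwing (y : SmallSplitGraph n) : UnbalancedSplitGraph n :=
  have hm : 0 < n - y.1 := Nat.sub_pos_of_lt y.1.isLt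
  ⟨(cliqueExtension y.2.1 y.2.2.exists_card_eq_alphaNum.choose (Fin (n - y.1))).overFin
      (by simp only [Fintype.card_sum, Fintype.card_fin]; omega), by
    obtain ⟨B, h, hB⟩ := y.2.2.exists_card_eq_alphaNum.choose_spec
    have hT := h.isSwingPartition_cliqueExtension hB (⟨0, hm⟩ : Fin (n - y.1))
    exact ⟨(overFinIso _ _).isSplit ⟨_, _, hT.isKSPartition⟩, fun hG =>
      hT.isKSPartition.not_isBalanced_of_adj hT.mem hT.adj
        ((overFinIso _ _).symm.isBalanced hG)⟩⟩

theorem nonempty_iso_deleteSwing {W : Type*} [Fintype W] [DecidableEq W]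
    (x : UnbalancedSplitGraph n) {G' : SimpleGraph W} (ψ : x.1 ≃g G') {K S : Finset W} {s : W}
    (hT : IsSwingPartition G' K S s) :
    Nonempty ((deleteSwing x).2.1 ≃g G'.induce (deletionSet G' K S s)ᶜ) := by
  obtain ⟨K₀, S₀, s₀, hT₀, hD⟩ := chosenDeletionSet_spec x
  obtain ⟨e⟩ := hT₀.nonempty_iso_induce ψ hT
  rw [hD] at e
  exact ⟨(overFinIso _ _).symm.trans e⟩

theorem nonempty_iso_addSwing {α ρ : Type*} [Fintype α] [DecidableEq α]
    (y : SmallSplitGraph n) {H' : SimpleGraph α} (ψ : y.2.1 ≃g H') {A' B' : Finset α}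
    (h' : IsKSPartition H' A' B') (hB' : B'.card = alphaNum H') (e : Fin (n - y.1) ≃ ρ) :
    Nonempty ((addSwing y).1 ≃g cliqueExtension H' A' ρ) := by
  obtain ⟨B, h, hB⟩ := y.2.2.exists_card_eq_alphaNum.choose_spec
  obtain ⟨χ⟩ := h.nonempty_iso_cliqueExtension ψ hB h' hB' e
  exact ⟨(overFinIso _ _).symm.trans χ⟩

theorem deleteSwing_rel (x x' : UnbalancedSplitGraph n) (hxx' : USplitIsoRel n x x') :
    SmallSplitRel n (deleteSwing x) (deleteSwing x') := by
  obtain ⟨ψ⟩ := hxx'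
  obtain ⟨K, S, s, hT, -⟩ := chosenDeletionSet_spec x'
  obtain ⟨e⟩ := nonempty_iso_deleteSwing x ψ hT
  obtain ⟨e'⟩ := nonempty_iso_deleteSwing x' .refl hT
  exact ⟨e.trans e'.symm⟩

theorem addSwing_rel (y y' : SmallSplitGraph n) (hyy' : SmallSplitRel n y y') :
    USplitIsoRel n (addSwing y) (addSwing y') := by
  obtain ⟨ψ⟩ := hyy'
  have ht : y.1 = y'.1 := Fin.ext (by simpa using Fintype.card_congr ψ.toEquiv)
  obtain ⟨B', h', hB'⟩ := y'.2.2.exists_card_eq_alphaNum.choose_spec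
  obtain ⟨e⟩ := nonempty_iso_addSwing y ψ h' hB' (finCongr (by rw [ht]))
  obtain ⟨e'⟩ := nonempty_iso_addSwing y' .refl h' hB' (.refl _)
  exact ⟨e.trans e'.symm⟩

theorem addSwing_deleteSwing (x : UnbalancedSplitGraph n) :
    USplitIsoRel n (addSwing (deleteSwing x)) x := by
  obtain ⟨K, S, s, hT, hD⟩ := chosenDeletionSet_spec x
  have hcard :
      Fintype.card (Fin (n - (deleteSwing x).1)) = Fintype.card (deletionSet x.1 K S s) := by
    have := set_fintype_card_le_univ (deletionSet x.1 K S s)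
    simp only [Fintype.card_fin, deleteSwing, ← hD, Fintype.card_compl_set] at this ⊢
    omega
  obtain ⟨e⟩ := nonempty_iso_addSwing (deleteSwing x) (hD ▸ (overFinIso _ _).symm)
    (hT.isKSPartition.induce _) hT.card_subtype_eq_alphaNum (Fintype.equivOfCardEq hcard)
  exact ⟨e.trans hT.cliqueExtensionIso⟩

theorem deleteSwing_addSwing (y : SmallSplitGraph n) :
    SmallSplitRel n (deleteSwing (addSwing y)) y := by
  obtain ⟨B, h, hB⟩ := y.2.2.exists_card_eq_alphaNum.choose_spec
  have hm : 0 < n - y.1 := Nat.sub_pos_of_lt y.1.isLt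
  have hT := h.isSwingPartition_cliqueExtension hB (⟨0, hm⟩ : Fin (n - y.1))
  obtain ⟨e⟩ := nonempty_iso_deleteSwing (addSwing y) (overFinIso _ _).symm hT
  rw [h.deletionSet_cliqueExtension hB] at e
  exact nonempty_iso_induce_compl_range_inr.map e.trans

end Compilation

/-- Compilation theorem for split graphs: there is a bijection between isomorphism
classes of unbalanced split graphs on `n` vertices and isomorphism classes of split
graphs on `t` vertices, `0 ≤ t ≤ n − 1`. -/
theorem split_compilation (n : ℕ) :
    Nonempty (Quot (USplitIsoRel n) ≃ Quot (SmallSplitRel n)) :=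
  ⟨{ toFun := Quot.map deleteSwing deleteSwing_rel
     invFun := Quot.map addSwing addSwing_rel
     left_inv := Quot.ind fun x => Quot.sound (addSwing_deleteSwing x)
     right_inv := Quot.ind fun y => Quot.sound (deleteSwing_addSwing y) }⟩
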